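/- arXiv:math/0509097 — 2 statements merged into one kernel-verified Lean document; each statement's English description precedes it below -/
import Mathlib

section
/- The closure of the graph G of Kuratowski's function f in C × [−1,1] is equal to G ∪ ⋃_{x ∈ D} ({x} × I_x), where I_x = [f(x) − 2^{−k_x}, f(x) + 2^{−k_x}]. -/
/-! For a set `S ⊆ ℕ` let `ksum S = Σ_j (-1)^{s_j} 2^{-(j+1)}`, where `s_0 < s_1 < ⋯` enumerate
`S`, so that `f x = ksum (supp x)`. If `T` agrees with `S` below `N`, the first `count S N` terms
of the two sums coincide, hence `|ksum T - ksum S| ≤ 2 · 2^{-m}` as soon as `S` has `m` elements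
below `N`; if all of `S` lies below `N`, the tail of `S` vanishes and the bound improves to
`2^{-|S|}`. So `f` is continuous at every `x ∈ E`, and near `x ∈ D` its values stay in `I_x`.
Conversely, adding to a finite support a new point `m` beyond it moves `f` by
`(-1)^m 2^{-(k+1)}`; choosing the parity of `m` greedily steers `f` to within `2^{-(k+r)}` of any
prescribed `t ∈ I_x` after `r` steps, without touching the coordinates below any given bound. -/

open Set Topology

/-- The Cantor space `2^ℕ`, with coordinates indexed by the positive integers. -/
abbrev Cant : Type := ℕ+ → Bool

/-- The support of a point of the Cantor space, as a set of (positive) natural numbers. -/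
def ksupp (x : Cant) : Set ℕ := {i | ∃ h : 0 < i, x ⟨i, h⟩ = true}

open scoped Classical in
/-- Kuratowski's function `f(x) = Σ_j (−1)^{c_x(j)} 2^{−j}`, where `c_x` enumerates the
support of `x` in increasing order; here the summation index `j : ℕ` is the 0-based
version of the paper's 1-based position index, so the weight is `2^{−(j+1)}`. -/
noncomputable def kf (x : Cant) : ℝ :=
  ∑' j : ℕ, if (ksupp x).Infinite ∨ j < (ksupp x).ncard then
    (-1 : ℝ) ^ (Nat.nth (· ∈ ksupp x) j) * (2 : ℝ) ^ (-(j + 1 : ℤ)) else 0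

namespace Nat

variable {p q : ℕ → Prop} [DecidablePred p] [DecidablePred q] {N : ℕ}

theorem count_eq_of_forall_lt_iff (h : ∀ i < N, (p i ↔ q i)) {n : ℕ} (hn : n ≤ N) :
    count p n = count q n := by
  simp only [count_eq_card_filter_range]
  exact congrArg Finset.card <| Finset.filter_congr fun i hi =>
    h i ((Finset.mem_range.1 hi).trans_le hn)

theorem nth_eq_of_forall_lt_iff (h : ∀ i < N, (p i ↔ q i)) {j : ℕ} (hj : j < count p N) :
    nth q j = nth p j := by
  have hj' : ∀ hf : (Set.ofPred p).Finite, j < hf.toFinset.card := fun hf =>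
    hj.trans_le (count_le_card hf N)
  have hlt : nth p j < N := nth_lt_of_lt_count hj
  have hq : q (nth p j) := (h _ hlt).1 (nth_mem j hj')
  calc nth q j = nth q (count q (nth p j)) := by
        rw [← count_eq_of_forall_lt_iff h hlt.le, count_nth hj']
    _ = nth p j := nth_count hq

theorem count_eq_ncard_of_subset_Iio {S : Set ℕ} [DecidablePred (· ∈ S)] (hS : S ⊆ Set.Iio N) :
    count (· ∈ S) N = S.ncard := by
  rw [count_eq_card_filter_range, ← Set.ncard_coe_finset]
  congr 1
  ext i
  simpa using fun hi => hS hi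

end Nat

open scoped Classical in
noncomputable def kterm (S : Set ℕ) (j : ℕ) : ℝ :=
  if S.Infinite ∨ j < S.ncard then
    (-1 : ℝ) ^ (Nat.nth (· ∈ S) j) * (2 : ℝ) ^ (-(j + 1 : ℤ)) else 0

noncomputable def ksum (S : Set ℕ) : ℝ := ∑' j, kterm S j

theorem kf_eq_ksum (x : Cant) : kf x = ksum (ksupp x) := rfl

section ksum

open scoped Classical

variable {S T : Set ℕ} {N : ℕ}

theorem abs_kterm_le (S : Set ℕ) (j : ℕ) : |kterm S j| ≤ 2⁻¹ ^ (j + 1) := by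
  unfold kterm
  split_ifs
  · simp [abs_mul, ← zpow_natCast]
  · simp

theorem kterm_of_ncard_le (hS : S.Finite) {j : ℕ} (hj : S.ncard ≤ j) : kterm S j = 0 :=
  if_neg (by simpa using ⟨hS, hj⟩)

theorem summable_kterm (S : Set ℕ) : Summable (kterm S) :=
  .of_norm_bounded (summable_geometric_two.mul_left 2⁻¹) fun j => by
    simpa [pow_succ'] using abs_kterm_le S j

theorem abs_tsum_kterm_add_le (S : Set ℕ) (m : ℕ) :
    |∑' j, kterm S (j + m)| ≤ 2⁻¹ ^ m :=
  tsum_of_norm_bounded (f := fun j => kterm S (j + m)) (hasSum_geometric_two' (2⁻¹ ^ m))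
    fun j => by simpa [pow_add, pow_succ, div_eq_mul_inv, mul_comm, mul_left_comm, mul_assoc]
        using abs_kterm_le S (j + m)

theorem ksum_eq_sum_range_add_tsum (S : Set ℕ) (m : ℕ) :
    ksum S = ∑ j ∈ Finset.range m, kterm S j + ∑' j, kterm S (j + m) :=
  ((summable_kterm S).sum_add_tsum_nat_add m).symm

theorem ksum_eq_sum_range_ncard (hS : S.Finite) :
    ksum S = ∑ j ∈ Finset.range S.ncard, kterm S j := by
  rw [ksum_eq_sum_range_add_tsum S S.ncard,
    tsum_congr fun j => kterm_of_ncard_le hS (Nat.le_add_left _ j), tsum_zero, add_zero]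

theorem infinite_or_lt_ncard_of_lt_count {j : ℕ} (hj : j < Nat.count (· ∈ S) N) :
    S.Infinite ∨ j < S.ncard := by
  refine S.finite_or_infinite.symm.imp_right fun hS => ?_
  rw [ncard_eq_toFinset_card S hS]
  exact hj.trans_le (Nat.count_le_card (p := (· ∈ S)) hS N)

theorem kterm_eq_of_forall_lt_iff (h : ∀ i < N, (i ∈ S ↔ i ∈ T)) {j : ℕ}
    (hj : j < Nat.count (· ∈ S) N) : kterm S j = kterm T j := by
  have hjT : j < Nat.count (· ∈ T) N := Nat.count_eq_of_forall_lt_iff h le_rfl ▸ hj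
  unfold kterm
  rw [if_pos (infinite_or_lt_ncard_of_lt_count hj), if_pos (infinite_or_lt_ncard_of_lt_count hjT),
    Nat.nth_eq_of_forall_lt_iff h hj]

theorem ksum_sub_ksum_eq (h : ∀ i < N, (i ∈ S ↔ i ∈ T)) {m : ℕ}
    (hm : m ≤ Nat.count (· ∈ S) N) :
    ksum T - ksum S = ∑' j, kterm T (j + m) - ∑' j, kterm S (j + m) := by
  rw [ksum_eq_sum_range_add_tsum T m, ksum_eq_sum_range_add_tsum S m,
    Finset.sum_congr rfl fun j hj =>
      kterm_eq_of_forall_lt_iff h ((Finset.mem_range.1 hj).trans_le hm)]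
  ring

theorem abs_ksum_sub_ksum_le (h : ∀ i < N, (i ∈ S ↔ i ∈ T)) {m : ℕ}
    (hm : m ≤ Nat.count (· ∈ S) N) : |ksum T - ksum S| ≤ 2 * 2⁻¹ ^ m := by
  rw [ksum_sub_ksum_eq h hm, two_mul]
  exact (abs_sub _ _).trans (add_le_add (abs_tsum_kterm_add_le T m) (abs_tsum_kterm_add_le S m))

theorem abs_ksum_sub_ksum_le_of_subset_Iio (hS : S ⊆ Iio N) (h : ∀ i < N, (i ∈ S ↔ i ∈ T)) :
    |ksum T - ksum S| ≤ 2⁻¹ ^ S.ncard := by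
  have hfin : S.Finite := (finite_Iio N).subset hS
  rw [ksum_sub_ksum_eq h (Nat.count_eq_ncard_of_subset_Iio hS).ge,
    tsum_congr fun j => kterm_of_ncard_le hfin (Nat.le_add_left _ j), tsum_zero, sub_zero]
  exact abs_tsum_kterm_add_le T _

theorem ksum_insert {m : ℕ} (hS : S ⊆ Iio m) :
    ksum (insert m S) = ksum S + (-1) ^ m * 2⁻¹ ^ (S.ncard + 1) := by
  have hfin : S.Finite := (finite_Iio m).subset hS
  have hcard : (insert m S).ncard = S.ncard + 1 :=
    ncard_insert_of_notMem (fun hm => lt_irrefl m (hS hm)) hfin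
  have h : ∀ i < m, (i ∈ S ↔ i ∈ insert m S) := fun i hi => by
    simp [hi.ne]
  have hcount : Nat.count (· ∈ S) m = S.ncard := Nat.count_eq_ncard_of_subset_Iio hS
  have hnth : Nat.nth (· ∈ insert m S) S.ncard = m := by
    rw [← hcount, Nat.count_eq_of_forall_lt_iff h le_rfl]
    exact Nat.nth_count (mem_insert m S)
  have hlast : kterm (insert m S) S.ncard = (-1) ^ m * 2⁻¹ ^ (S.ncard + 1) := by
    rw [kterm, if_pos (Or.inr (by omega)), hnth]
    simp [← zpow_natCast]
  rw [ksum_eq_sum_range_ncard (hfin.insert m), hcard, Finset.sum_range_succ, hlast,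
    ksum_eq_sum_range_ncard hfin]
  congr 1
  exact Finset.sum_congr rfl fun j hj =>
    (kterm_eq_of_forall_lt_iff h (hcount ▸ Finset.mem_range.1 hj)).symm

end ksum

theorem ksupp_update_true (x : Cant) (m : ℕ+) :
    ksupp (Function.update x m true) = insert (m : ℕ) (ksupp x) := by
  ext i
  simp only [ksupp, mem_insert_iff, mem_ofPred_eq]
  by_cases him : i = m
  · subst him
    exact iff_of_true ⟨m.pos, Function.update_self m true x⟩ (.inl rfl)
  · rw [or_iff_right him]
    refine exists_congr fun h => Eq.to_iff (congrArg (· = true) ?_)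
    exact Function.update_of_ne (a := (⟨i, h⟩ : ℕ+)) (fun e => him (congrArg Subtype.val e)) _ _

theorem mem_ksupp_iff_of_forall_lt_eq {x y : Cant} {N : ℕ}
    (h : ∀ i : ℕ+, (i : ℕ) < N → y i = x i) : ∀ i < N, (i ∈ ksupp x ↔ i ∈ ksupp y) :=
  fun i hi => exists_congr fun h0 => by rw [h ⟨i, h0⟩ hi]

theorem exists_abs_sub_kf_update_le {x : Cant} {M : ℕ} (hx : ksupp x ⊆ Iio M) {t : ℝ}
    (ht : |t - kf x| ≤ 2⁻¹ ^ (ksupp x).ncard) :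
    ∃ m : ℕ+, M ≤ m ∧
      |t - kf (Function.update x m true)| ≤ 2⁻¹ ^ ((ksupp x).ncard + 1) := by
  set k := (ksupp x).ncard
  have hkf : ∀ m : ℕ+, M ≤ m →
      kf (Function.update x m true) = kf x + (-1) ^ (m : ℕ) * 2⁻¹ ^ (k + 1) := fun m hm => by
    rw [kf_eq_ksum, ksupp_update_true, ksum_insert (hx.trans (Iio_subset_Iio hm)), kf_eq_ksum]
  have h2 : (2⁻¹ : ℝ) ^ k = 2 * 2⁻¹ ^ (k + 1) := by rw [pow_succ]; ring
  rw [h2, abs_le] at ht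
  rcases le_total (kf x) t with hle | hle
  · refine ⟨(2 * M + 1).succPNat, by simp; omega, ?_⟩
    rw [hkf _ (by simp; omega), Nat.succPNat_coe, Even.neg_one_pow ⟨M + 1, by omega⟩]
    rw [abs_le]; constructor <;> linarith
  · refine ⟨(2 * M + 2).succPNat, by simp; omega, ?_⟩
    rw [hkf _ (by simp; omega), Nat.succPNat_coe, Odd.neg_one_pow ⟨M + 1, by omega⟩]
    rw [abs_le]; constructor <;> linarith

theorem exists_forall_lt_eq_abs_sub_kf_le (r : ℕ) :
    ∀ {x : Cant} {M : ℕ}, ksupp x ⊆ Iio M → ∀ {t : ℝ},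
      |t - kf x| ≤ 2⁻¹ ^ (ksupp x).ncard →
      ∃ y : Cant, (∀ i : ℕ+, (i : ℕ) < M → y i = x i) ∧
        |t - kf y| ≤ 2⁻¹ ^ ((ksupp x).ncard + r) := by
  induction r with
  | zero => exact fun _ _ ht => ⟨_, fun _ _ => rfl, ht⟩
  | succ r ih =>
    intro x M hx t ht
    obtain ⟨m, hMm, hm⟩ := exists_abs_sub_kf_update_le hx ht
    have hsupp := ksupp_update_true x m
    have hcard : (ksupp (Function.update x m true)).ncard = (ksupp x).ncard + 1 := by
      rw [hsupp]
      exact ncard_insert_of_notMem (fun h => (hx h).not_ge hMm)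
        ((finite_Iio M).subset hx)
    have hx' : ksupp (Function.update x m true) ⊆ Iio (m + 1) := by
      rw [hsupp]
      exact insert_subset (Nat.lt_succ_self _) (hx.trans (Iio_subset_Iio (by omega)))
    obtain ⟨y, hy, hty⟩ := ih hx' (hcard ▸ hm)
    refine ⟨y, fun i hi => ?_, by rwa [hcard, add_right_comm] at hty⟩
    rw [hy i (by omega), Function.update_of_ne (by rintro rfl; omega)]

theorem hasBasis_nhds_cant (x : Cant) :
    (𝓝 x).HasBasis (fun _ : ℕ => True) fun N => {y | ∀ i : ℕ+, (i : ℕ) < N → y i = x i} := by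
  refine ⟨fun s => ⟨fun hs => ?_, fun ⟨N, _, hN⟩ => Filter.mem_of_superset ?_ hN⟩⟩
  · obtain ⟨I, hI, u, hu, hIs⟩ := Filter.mem_pi.1 (nhds_pi (a := x) ▸ hs)
    obtain ⟨B, hB⟩ := hI.bddAbove
    refine ⟨B + 1, trivial, fun y hy => hIs fun i hi => ?_⟩
    have hiB : (i : ℕ) < B + 1 := Nat.lt_succ_of_le ((PNat.coe_le_coe _ _).2 (hB hi))
    exact hy i hiB ▸ mem_of_mem_nhds (hu i)
  · exact set_pi_mem_nhds ((finite_Iio N).preimage PNat.coe_injective.injOn)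
      fun i _ => (isOpen_discrete {x i}).mem_nhds rfl

theorem mem_closure_graph_iff {g : Cant → ℝ} {x : Cant} {t : ℝ} :
    (x, t) ∈ closure {p : Cant × ℝ | p.2 = g p.1} ↔
      ∀ N : ℕ, ∀ ε > 0, ∃ y : Cant, (∀ i : ℕ+, (i : ℕ) < N → y i = x i) ∧ |t - g y| < ε := by
  rw [mem_closure_iff_nhds_basis ((hasBasis_nhds_cant x).prod_nhds Metric.nhds_basis_ball)]
  simp [Real.dist_eq, abs_sub_comm]

theorem abs_sub_le_of_mem_closure_graph {g : Cant → ℝ} {x : Cant} {t c : ℝ} {N : ℕ}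
    (h : (x, t) ∈ closure {p : Cant × ℝ | p.2 = g p.1})
    (hc : ∀ y : Cant, (∀ i : ℕ+, (i : ℕ) < N → y i = x i) → |g y - g x| ≤ c) :
    |t - g x| ≤ c := by
  refine le_of_forall_pos_le_add fun ε hε => ?_
  obtain ⟨y, hy, hty⟩ := mem_closure_graph_iff.1 h N ε hε
  calc |t - g x| ≤ |t - g y| + |g y - g x| := abs_sub_le _ _ _
    _ ≤ c + ε := by linarith [hc y hy]

theorem exists_ksupp_subset_Iio {x : Cant} (hx : (ksupp x).Finite) :
    ∃ N, ksupp x ⊆ Iio N :=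
  let ⟨B, hB⟩ := hx.bddAbove
  ⟨B + 1, fun _ hi => Nat.lt_succ_of_le (hB hi)⟩

theorem abs_sub_kf_le_of_mem_closure_of_finite {x : Cant} {t : ℝ}
    (h : (x, t) ∈ closure {p : Cant × ℝ | p.2 = kf p.1}) (hx : (ksupp x).Finite) :
    |t - kf x| ≤ 2⁻¹ ^ (ksupp x).ncard := by
  obtain ⟨N, hN⟩ := exists_ksupp_subset_Iio hx
  exact abs_sub_le_of_mem_closure_graph h fun y hy =>
    abs_ksum_sub_ksum_le_of_subset_Iio hN (mem_ksupp_iff_of_forall_lt_eq hy)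

open scoped Classical in
theorem eq_kf_of_mem_closure_of_infinite {x : Cant} {t : ℝ}
    (h : (x, t) ∈ closure {p : Cant × ℝ | p.2 = kf p.1}) (hx : (ksupp x).Infinite) :
    t = kf x := by
  refine eq_of_forall_dist_le fun δ hδ => ?_
  obtain ⟨m, hm⟩ := exists_pow_lt_of_lt_one (half_pos hδ) (by norm_num : (2⁻¹ : ℝ) < 1)
  have hcount : m ≤ Nat.count (· ∈ ksupp x) (Nat.nth (· ∈ ksupp x) m) :=
    (Nat.count_nth_of_infinite (p := (· ∈ ksupp x)) hx m).ge
  have hle := abs_sub_le_of_mem_closure_graph h fun y hy =>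
    abs_ksum_sub_ksum_le (mem_ksupp_iff_of_forall_lt_eq hy) hcount
  rw [Real.dist_eq]
  linarith

theorem mem_closure_of_abs_sub_kf_le {x : Cant} {t : ℝ} (hx : (ksupp x).Finite)
    (ht : |t - kf x| ≤ 2⁻¹ ^ (ksupp x).ncard) :
    (x, t) ∈ closure {p : Cant × ℝ | p.2 = kf p.1} := by
  refine mem_closure_graph_iff.2 fun N ε hε => ?_
  obtain ⟨B, hB⟩ := exists_ksupp_subset_Iio hx
  obtain ⟨r, hr⟩ := exists_pow_lt_of_lt_one hε (by norm_num : (2⁻¹ : ℝ) < 1)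
  obtain ⟨y, hy, hty⟩ := exists_forall_lt_eq_abs_sub_kf_le r
    (hB.trans (Iio_subset_Iio (le_max_right N B))) ht
  refine ⟨y, fun i hi => hy i (lt_max_of_lt_left hi), hty.trans_lt (lt_of_le_of_lt ?_ hr)⟩
  exact pow_le_pow_of_le_one (by norm_num) (by norm_num) (Nat.le_add_left r _)

/-- The closure of the graph `G` of Kuratowski's function is
`G ∪ ⋃_{x ∈ D} ({x} × I_x)`, where `I_x = [f(x) − 2^{−k_x}, f(x) + 2^{−k_x}]`.
(All the sets involved lie in `C × [−1,1]`, so the closure may equivalently be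
taken there or in `C × ℝ`.) -/
theorem closure_graph_kf :
    closure {p : Cant × ℝ | p.2 = kf p.1} =
      {p : Cant × ℝ | p.2 = kf p.1} ∪
        ⋃ x ∈ {x : Cant | (ksupp x).Finite},
          {x} ×ˢ Icc (kf x - (2 : ℝ) ^ (-((ksupp x).ncard : ℤ)))
            (kf x + (2 : ℝ) ^ (-((ksupp x).ncard : ℤ))) := by
  ext ⟨x, t⟩
  have hI : (x, t) ∈ ⋃ x ∈ {x : Cant | (ksupp x).Finite},
      {x} ×ˢ Icc (kf x - (2 : ℝ) ^ (-((ksupp x).ncard : ℤ)))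
        (kf x + (2 : ℝ) ^ (-((ksupp x).ncard : ℤ))) ↔
      (ksupp x).Finite ∧ |t - kf x| ≤ 2⁻¹ ^ (ksupp x).ncard := by
    simp [abs_sub_le_iff, add_comm, and_comm]
  rw [mem_union, hI, mem_ofPred_eq]
  constructor
  · intro h
    rcases (ksupp x).finite_or_infinite with hx | hx
    · exact .inr ⟨hx, abs_sub_kf_le_of_mem_closure_of_finite h hx⟩
    · exact .inl (eq_kf_of_mem_closure_of_infinite h hx)
  · rintro (h | ⟨hx, ht⟩)
    · exact subset_closure h
    · exact mem_closure_of_abs_sub_kf_le hx ht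
end

section
/- If x ∈ D, then the point (x, f(x)) does not have a neighbourhood basis in the graph G of clopen sets: there is a neighbourhood N of (x, f(x)) in G such that no subset of G that is clopen in G satisfies (x, f(x)) ∈ U ⊆ N (so the small inductive dimension of G at (x, f(x)) is at least 1). -/
open Set Topology

/-!
A locally constant `g` on the graph `G` cannot tell `(y, f y)` with `y ∈ D_k` apart from
`(y + e_c, f (y + e_c))` for large `c`. As `f (x + e_c) = f x + (-1)^c 2^{-(k+1)}`, no clopen set
containing `(x, f x)` fits into the `2^{-(k+1)}`-band around `f x`.

If `g` told them apart for infinitely many `c`, we could run a chase: a point `y ∈ D_k` heads for a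
target value `T = f y ± 2^{-k}`, each step adding a far coordinate of the parity that halves the
distance to `T`. While `g` does not change, `T` and a clopen trap `O ∋ y`, in which the value `T`
forces the other value of `g`, are kept. When every such step changes `g`, the old point `y`
becomes the target, and local constancy of `g` at `(y, f y)` provides the new trap. The points
converge to some `z ∈ E` with `f` continuous along the sequence, so `g` is eventually constant
along it; then target and trap freeze, `f z = T` and `z ∈ O`, contradicting the trap.
-/

open Filter Function
open scoped Classical

lemma Nat.count_congr_of_lt {p q : ℕ → Prop} [DecidablePred p] [DecidablePred q] {n : ℕ}
    (h : ∀ k < n, p k ↔ q k) : Nat.count p n = Nat.count q n :=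
  le_antisymm (Nat.count_mono_left fun k hk => (h k hk).1)
    (Nat.count_mono_left fun k hk => (h k hk).2)

lemma Nat.count_eq_ncard {S : Set ℕ} {n : ℕ} (h : ∀ m ∈ S, m < n) :
    Nat.count (· ∈ S) n = S.ncard := by
  have hS : S = ↑({m ∈ Finset.range n | m ∈ S}) := by
    ext m
    simpa using fun hm => h m hm
  rw [Nat.count_eq_card_filter_range, ← Set.ncard_coe_finset, ← hS]

lemma two_zpow_neg_succ (j : ℕ) : (2 : ℝ) ^ (-(j + 1 : ℤ)) = 2⁻¹ ^ (j + 1) := by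
  rw [← Nat.cast_succ, zpow_neg, zpow_natCast, inv_pow]

lemma coe_mem_ksupp {y : Cant} {m : ℕ+} : (m : ℕ) ∈ ksupp y ↔ y m = true :=
  ⟨fun ⟨_, h⟩ => h, fun h => ⟨m.pos, h⟩⟩

lemma ksupp_update (y : Cant) (c : ℕ+) : ksupp (update y c true) = insert (c : ℕ) (ksupp y) := by
  ext m
  rcases Nat.eq_zero_or_pos m with rfl | hm
  · simp [ksupp, c.pos.ne]
  · lift m to ℕ+ using hm
    rw [coe_mem_ksupp, Set.mem_insert_iff, coe_mem_ksupp, PNat.coe_inj, update_apply]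
    split_ifs <;> simp_all

/-- The summands of `kf z` indexed by the support itself:
`f(z) = Σ_{m ∈ supp z} (-1)^m 2^{-#(supp z ∩ [1, m])}`. -/
noncomputable def kweight (z : Cant) (m : ℕ) : ℝ :=
  if m ∈ ksupp z then (-1) ^ m * 2⁻¹ ^ (Nat.count (· ∈ ksupp z) m + 1) else 0

lemma hasSum_kweight (z : Cant) : HasSum (kweight z) (kf z) := by
  set a : ℕ → ℝ := fun j => if (ksupp z).Infinite ∨ j < (ksupp z).ncard then
    (-1 : ℝ) ^ (Nat.nth (· ∈ ksupp z) j) * 2⁻¹ ^ (j + 1) else 0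
  have hkf : kf z = ∑' j, a j := by simp only [kf, two_zpow_neg_succ, a]
  have ha : Summable a := by
    refine Summable.of_norm_bounded ((summable_nat_add_iff 1).2
      (summable_geometric_of_lt_one (r := (2⁻¹ : ℝ)) (by norm_num) (by norm_num))) fun j => ?_
    simp only [a]
    split_ifs <;> simp
  have hvalid : ∀ j, ((ksupp z).Infinite ∨ j < (ksupp z).ncard) ↔
      ∀ hf : (ksupp z).Finite, j < hf.toFinset.card := by
    intro j
    rw [or_iff_not_imp_left, Set.not_infinite]
    exact forall_congr' fun hf => by rw [Set.ncard_eq_toFinset_card _ hf]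
  have hne : ∀ j, a j ≠ 0 ↔ ∀ hf : (ksupp z).Finite, j < hf.toFinset.card := by
    intro j
    rw [← hvalid]
    simp [a, or_iff_not_imp_left]
  rw [hkf]
  refine (hasSum_iff_hasSum_of_ne_zero_bij (g := a) (fun j => Nat.nth (· ∈ ksupp z) j) ?_ ?_ ?_).2
    ha.hasSum
  · rintro ⟨i, hi⟩ ⟨j, hj⟩ hij
    rw [Function.mem_support, hne] at hi hj
    rw [Subtype.mk.injEq, ← Nat.count_nth (p := (· ∈ ksupp z)) hi,
      ← Nat.count_nth (p := (· ∈ ksupp z)) hj]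
    exact congrArg _ hij
  · intro m hm
    have hmS : m ∈ ksupp z := by by_contra h; exact hm (if_neg h)
    exact ⟨⟨Nat.count (· ∈ ksupp z) m,
      (hne _).2 fun hf => Nat.count_lt_card (p := (· ∈ ksupp z)) hf hmS⟩,
      Nat.nth_count (p := (· ∈ ksupp z)) hmS⟩
  · rintro ⟨j, hj⟩
    rw [Function.mem_support, hne] at hj
    have hmem : Nat.nth (· ∈ ksupp z) j ∈ ksupp z := Nat.nth_mem (p := (· ∈ ksupp z)) j hj
    rw [kweight, if_pos hmem, Nat.count_nth (p := (· ∈ ksupp z)) hj]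
    simp [a, (hvalid j).2 hj]

lemma kweight_congr {z z' : Cant} {m : ℕ} (h : ∀ k ≤ m, k ∈ ksupp z ↔ k ∈ ksupp z') :
    kweight z m = kweight z' m := by
  have hcount : Nat.count (· ∈ ksupp z) m = Nat.count (· ∈ ksupp z') m :=
    Nat.count_congr_of_lt fun k hk => h k hk.le
  simp only [kweight, h m le_rfl, hcount]

lemma kf_eq_sum_range {z : Cant} {n : ℕ} (h : ∀ m ∈ ksupp z, m < n) :
    kf z = ∑ m ∈ Finset.range n, kweight z m :=
  (hasSum_kweight z).unique <| hasSum_sum_of_ne_finset_zero fun m hm =>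
    if_neg fun hz => hm (Finset.mem_range.2 (h m hz))

lemma ncard_ksupp_update {y : Cant} {c : ℕ+} (hc : ∀ m ∈ ksupp y, m < c) :
    (ksupp (update y c true)).ncard = (ksupp y).ncard + 1 := by
  rw [ksupp_update, Set.ncard_insert_of_notMem (fun h => (hc _ h).false)
    ((Set.finite_Iio (c : ℕ)).subset hc)]

lemma kf_update {y : Cant} {c : ℕ+} (hc : ∀ m ∈ ksupp y, m < c) :
    kf (update y c true) = kf y + (-1) ^ (c : ℕ) * 2⁻¹ ^ ((ksupp y).ncard + 1) := by
  have hsupp := ksupp_update y c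
  have hle : ∀ m ∈ ksupp (update y c true), m < c + 1 := by
    simp only [hsupp, Set.mem_insert_iff]
    rintro m (rfl | hm)
    exacts [Nat.lt_succ_self _, (hc m hm).trans (Nat.lt_succ_self _)]
  have hbelow : ∀ k < (c : ℕ), k ∈ ksupp (update y c true) ↔ k ∈ ksupp y := fun k hk => by
    rw [hsupp, Set.mem_insert_iff, or_iff_right hk.ne]
  rw [kf_eq_sum_range hle, Finset.sum_range_succ, kf_eq_sum_range hc]
  congr 1
  · exact Finset.sum_congr rfl fun m hm =>
      kweight_congr fun k hk => hbelow k (hk.trans_lt (Finset.mem_range.1 hm))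
  · rw [kweight, if_pos (hsupp ▸ Set.mem_insert _ _), Nat.count_congr_of_lt hbelow,
      Nat.count_eq_ncard hc]

lemma tendsto_kf_of_ksupp_eq_inter_Iio {ι : Type*} {l : Filter ι} {w : ι → Cant} {n : ι → ℕ}
    {z : Cant} (hn : Tendsto n l atTop) (hw : ∀ i, ksupp (w i) = ksupp z ∩ Set.Iio (n i)) :
    Tendsto (fun i => kf (w i)) l (𝓝 (kf z)) := by
  have hkf : ∀ i, kf (w i) = ∑ m ∈ Finset.range (n i), kweight z m := fun i => by
    rw [kf_eq_sum_range fun m hm => by rw [hw] at hm; exact hm.2]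
    refine Finset.sum_congr rfl fun m hm => kweight_congr fun k hk => ?_
    rw [hw, Set.mem_inter_iff, Set.mem_Iio, and_iff_left (hk.trans_lt (Finset.mem_range.1 hm))]
  simp only [hkf]
  exact (hasSum_kweight z).tendsto_sum_nat.comp hn

lemma exists_tendsto_of_update {y : ℕ → Cant} {c : ℕ → ℕ+}
    (hc : ∀ i, ∀ m ∈ ksupp (y i), m < c i) (hy : ∀ i, y (i + 1) = update (y i) (c i) true) :
    ∃ z, Tendsto y atTop (𝓝 z) ∧ Tendsto (fun i => kf (y i)) atTop (𝓝 (kf z)) := by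
  set c' : ℕ → ℕ := fun i => c i
  have hsucc : ∀ i, ksupp (y (i + 1)) = insert (c' i) (ksupp (y i)) := fun i => by
    rw [hy, ksupp_update]
  have hmono : StrictMono c' :=
    strictMono_nat_of_lt_succ fun i => hc (i + 1) _ (hsucc i ▸ Set.mem_insert _ _)
  have hsupp : ∀ i, ksupp (y i) = ksupp (y 0) ∪ c' '' Set.Iio i := by
    intro i
    induction i with
    | zero => simp
    | succ i ih =>
      rw [hsucc, ih, ← Order.succ_eq_add_one, Order.Iio_succ_eq_insert, Set.image_insert_eq,
        Set.union_insert]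
  let z : Cant := fun m => decide ((m : ℕ) ∈ ksupp (y 0) ∪ Set.range c')
  have hz : ksupp z = ksupp (y 0) ∪ Set.range c' := by
    ext m
    refine ⟨fun ⟨_, h⟩ => of_decide_eq_true h, fun h => ⟨?_, decide_eq_true h⟩⟩
    rcases h with h | ⟨j, rfl⟩
    exacts [h.1, (c j).pos]
  have htrunc : ∀ i, ksupp (y (i + 1)) = ksupp z ∩ Set.Iio (c' i + 1) := by
    intro i
    ext m
    rw [hsupp (i + 1), hz]
    simp only [Set.mem_union, Set.mem_image, Set.mem_Iio, Set.mem_inter_iff,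
      Set.mem_range, Nat.lt_succ_iff]
    constructor
    · rintro (hm | ⟨j, hj, rfl⟩)
      · exact ⟨Or.inl hm, ((hc 0 m hm).trans_le (hmono.monotone (Nat.zero_le i))).le⟩
      · exact ⟨Or.inr ⟨j, rfl⟩, hmono.monotone hj⟩
    · rintro ⟨hm | ⟨j, rfl⟩, hle⟩
      exacts [Or.inl hm, Or.inr ⟨j, hmono.le_iff_le.1 hle, rfl⟩]
  refine ⟨z, tendsto_pi_nhds.2 fun m => ?_, (tendsto_add_atTop_iff_nat 1).1
    (tendsto_kf_of_ksupp_eq_inter_Iio (tendsto_add_atTop_nat 1 |>.comp hmono.tendsto_atTop) htrunc)⟩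
  refine tendsto_const_nhds.congr' ?_
  filter_upwards [eventually_gt_atTop (m : ℕ)] with i hi
  rw [Bool.eq_iff_iff, ← coe_mem_ksupp, ← coe_mem_ksupp, hz, hsupp i]
  simp only [Set.mem_union, Set.mem_image, Set.mem_Iio, Set.mem_range]
  exact or_congr_right
    ⟨fun ⟨j, hj⟩ => ⟨j, (hmono.id_le j).trans_lt (hj ▸ hi), hj⟩, fun ⟨j, _, hj⟩ => ⟨j, hj⟩⟩

abbrev KGraph : Type := {p : Cant × ℝ // p.2 = kf p.1}

noncomputable def graphPt (z : Cant) : KGraph := ⟨(z, kf z), rfl⟩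

lemma tendsto_graphPt {ι : Type*} {l : Filter ι} {w : ι → Cant} {z : Cant}
    (hw : Tendsto w l (𝓝 z)) (hkf : Tendsto (fun i => kf (w i)) l (𝓝 (kf z))) :
    Tendsto (fun i => graphPt (w i)) l (𝓝 (graphPt z)) :=
  tendsto_subtype_rng.2 (hw.prodMk_nhds hkf)

lemma tendsto_update_atTop (y : Cant) : Tendsto (fun c : ℕ+ => update y c true) atTop (𝓝 y) :=
  tendsto_pi_nhds.2 fun m => tendsto_const_nhds.congr' <|
    (eventually_gt_atTop m).mono fun _ hc => (update_of_ne hc.ne _ _).symm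

lemma eventually_ksupp_lt {y : Cant} (hy : (ksupp y).Finite) :
    ∀ᶠ c : ℕ+ in atTop, ∀ m ∈ ksupp y, m < c := by
  obtain ⟨B, hB⟩ := hy.bddAbove
  filter_upwards [eventually_ge_atTop B.succPNat] with c hc m hm
  exact (hB hm).trans_lt (Nat.lt_of_succ_le (PNat.coe_le_coe _ _ |>.2 hc))

lemma frequently_neg_one_pow_eq (p : ℕ) : ∃ᶠ c : ℕ+ in atTop, (-1 : ℝ) ^ (c : ℕ) = (-1) ^ p := by
  refine frequently_atTop.2 fun a => ⟨(⟨2 * a + p % 2, by positivity⟩ : ℕ+), ?_, ?_⟩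
  · change (a : ℕ) ≤ 2 * a + p % 2
    omega
  · rw [PNat.mk_coe, pow_add, pow_mul, neg_one_sq, one_pow, one_mul,
      ← neg_one_pow_eq_pow_mod_two]

lemma IsLocallyConstant.exists_isClopen_eq_of_kf_eq {X : Type*} {g : KGraph → X}
    (hg : IsLocallyConstant g) (y : Cant) :
    ∃ O : Set Cant, IsClopen O ∧ y ∈ O ∧ ∀ z ∈ O, kf z = kf y → g (graphPt z) = g (graphPt y) := by
  have hlevel : Tendsto graphPt (𝓝[{z | kf z = kf y}] y) (𝓝 (graphPt y)) :=
    tendsto_graphPt nhdsWithin_le_nhds <|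
      tendsto_const_nhds.congr' (eventually_nhdsWithin_of_forall fun _ hz => hz.symm)
  obtain ⟨O, ⟨hyO, hO⟩, hsub⟩ :=
    (nhds_basis_clopen y).mem_iff.1 <|
      eventually_nhdsWithin_iff.1 (hlevel.eventually (hg.eventually_eq _))
  exact ⟨O, hO, hyO, hsub⟩

section Chase

variable {X : Type*} {g : KGraph → X}

structure Chase (g : KGraph → X) where
  y : Cant
  T : ℝ
  p : ℕ
  O : Set Cant
  finite_ksupp : (ksupp y).Finite
  sub_kf : T - kf y = (-1) ^ p * 2⁻¹ ^ (ksupp y).ncard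
  isClopen : IsClopen O
  mem : y ∈ O
  trap : ∀ z ∈ O, kf z = T → g (graphPt z) ≠ g (graphPt y)

def Chase.Next (σ τ : Chase g) : Prop :=
  ∃ c : ℕ+, (∀ m ∈ ksupp σ.y, m < c) ∧ τ.y = update σ.y c true ∧
    (g (graphPt τ.y) = g (graphPt σ.y) → τ.T = σ.T ∧ τ.O = σ.O)

lemma Chase.exists_of_frequently (hg : IsLocallyConstant g) {y : Cant} (hy : (ksupp y).Finite)
    (h : ∃ᶠ c : ℕ+ in atTop, g (graphPt (update y c true)) ≠ g (graphPt y)) :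
    ∃ τ : Chase g, ∃ c : ℕ+, (∀ m ∈ ksupp y, m < c) ∧ τ.y = update y c true ∧
      g (graphPt τ.y) ≠ g (graphPt y) := by
  obtain ⟨O, hO, hyO, hOy⟩ := hg.exists_isClopen_eq_of_kf_eq y
  obtain ⟨c, ⟨hc, hcO⟩, hne⟩ := ((eventually_ksupp_lt hy).and
    ((tendsto_update_atTop y).eventually (hO.isOpen.mem_nhds hyO))).and_frequently h |>.exists
  refine ⟨⟨update y c true, kf y, c + 1, O, ?_, ?_, hO, hcO, fun z hz hzT => ?_⟩, c, hc, rfl, hne⟩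
  · rw [ksupp_update]
    exact hy.insert _
  · rw [kf_update hc, ncard_ksupp_update hc, pow_succ]
    ring
  · exact (hOy z hz hzT).trans_ne hne.symm

lemma Chase.exists_next (hg : IsLocallyConstant g) (σ : Chase g) : ∃ τ, σ.Next τ := by
  by_cases h : ∃ᶠ c : ℕ+ in atTop,
      (-1 : ℝ) ^ (c : ℕ) = (-1) ^ σ.p ∧ g (graphPt (update σ.y c true)) ≠ g (graphPt σ.y)
  · obtain ⟨τ, c, hc, hτ, hne⟩ :=
      Chase.exists_of_frequently hg σ.finite_ksupp (h.mono fun _ => And.right)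
    exact ⟨τ, c, hc, hτ, fun heq => absurd heq hne⟩
  rw [not_frequently] at h
  have hfar : ∀ᶠ c : ℕ+ in atTop, (∀ m ∈ ksupp σ.y, m < c) ∧ update σ.y c true ∈ σ.O :=
    (eventually_ksupp_lt σ.finite_ksupp).and
      ((tendsto_update_atTop σ.y).eventually (σ.isClopen.isOpen.mem_nhds σ.mem))
  obtain ⟨c, ⟨⟨hc, hcO⟩, hkeep⟩, hpar⟩ :=
    ((hfar.and h).and_frequently (frequently_neg_one_pow_eq σ.p)).exists
  have hsame : g (graphPt (update σ.y c true)) = g (graphPt σ.y) :=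
    not_not.1 fun hne => hkeep ⟨hpar, hne⟩
  refine ⟨⟨update σ.y c true, σ.T, σ.p, σ.O, ?_, ?_, σ.isClopen, hcO, fun z hz hzT => ?_⟩,
    c, hc, rfl, fun _ => ⟨rfl, rfl⟩⟩
  · rw [ksupp_update]
    exact σ.finite_ksupp.insert _
  · rw [kf_update hc, ncard_ksupp_update hc, hpar, pow_succ]
    linear_combination σ.sub_kf
  · rw [hsame]
    exact σ.trap z hz hzT

lemma Chase.not_forall_next (hg : IsLocallyConstant g) (σ : ℕ → Chase g) :
    ¬ ∀ i, (σ i).Next (σ (i + 1)) := by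
  intro hnext
  choose c hc hy hkeep using hnext
  obtain ⟨z, hz, hkfz⟩ := exists_tendsto_of_update hc hy
  obtain ⟨i₀, hi₀⟩ := eventually_atTop.1
    ((tendsto_graphPt hz hkfz).eventually (hg.eventually_eq (graphPt z)))
  have hstable : ∀ i ≥ i₀, (σ i).T = (σ i₀).T ∧ (σ i).O = (σ i₀).O := by
    intro i hi
    induction i, hi using Nat.le_induction with
    | base => exact ⟨rfl, rfl⟩
    | succ i hi ih =>
      obtain ⟨hT, hO⟩ := hkeep i ((hi₀ (i + 1) (by omega)).trans (hi₀ i hi).symm)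
      exact ⟨hT.trans ih.1, hO.trans ih.2⟩
  have hcard : ∀ i, (ksupp (σ i).y).ncard = i + (ksupp (σ 0).y).ncard := by
    intro i
    induction i with
    | zero => rw [zero_add]
    | succ i ih => rw [hy, ncard_ksupp_update (hc i), ih, add_right_comm]
  have hkfT : Tendsto (fun i => kf (σ i).y) atTop (𝓝 (σ i₀).T) := by
    refine tendsto_sub_nhds_zero_iff.1 <|
      squeeze_zero_norm' (a := fun i => 2⁻¹ ^ (ksupp (σ i).y).ncard) ?_ ?_
    · filter_upwards [eventually_ge_atTop i₀] with i hi
      rw [norm_sub_rev, ← (hstable i hi).1, (σ i).sub_kf]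
      simp
    · have hk : Tendsto (fun i => (ksupp (σ i).y).ncard) atTop atTop :=
        (tendsto_add_atTop_nat _).congr fun i => (hcard i).symm
      exact (tendsto_pow_atTop_nhds_zero_of_lt_one (by norm_num : (0 : ℝ) ≤ 2⁻¹)
        (by norm_num)).comp hk
  have hmem : z ∈ (σ i₀).O := (σ i₀).isClopen.isClosed.mem_of_tendsto hz <|
    eventually_atTop.2 ⟨i₀, fun i hi => (hstable i hi).2 ▸ (σ i).mem⟩
  exact (σ i₀).trap z hmem (tendsto_nhds_unique hkfz hkfT) (hi₀ i₀ le_rfl).symm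

end Chase

theorem IsLocallyConstant.eventually_comp_graphPt_update {X : Type*} {g : KGraph → X}
    (hg : IsLocallyConstant g) {y : Cant} (hy : (ksupp y).Finite) :
    ∀ᶠ c : ℕ+ in atTop, g (graphPt (update y c true)) = g (graphPt y) := by
  by_contra h
  rw [not_eventually] at h
  obtain ⟨σ₀, -⟩ := Chase.exists_of_frequently hg hy h
  choose next hnext using Chase.exists_next hg
  exact Chase.not_forall_next hg (fun n => next^[n] σ₀) fun i => by
    rw [Function.iterate_succ_apply']
    exact hnext _

/-- If `x ∈ D` then the point `(x, f(x))` does not have a neighbourhood basis of clopen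
sets in the graph `G` of Kuratowski's function: some neighbourhood `N` of `(x, f(x))`
contains no clopen set `U` with `(x, f(x)) ∈ U ⊆ N`
(so `ind_{(x,f(x))} G ≥ 1`). -/
theorem graph_kf_no_clopen_basis_at_D (x : Cant) (hx : (ksupp x).Finite) :
    ∃ N ∈ 𝓝 (⟨(x, kf x), rfl⟩ : {p : Cant × ℝ // p.2 = kf p.1}),
      ∀ U : Set {p : Cant × ℝ // p.2 = kf p.1},
        IsClopen U → (⟨(x, kf x), rfl⟩ : {p : Cant × ℝ // p.2 = kf p.1}) ∈ U → ¬ U ⊆ N := by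
  set δ : ℝ := 2⁻¹ ^ ((ksupp x).ncard + 1)
  refine ⟨{q | |q.1.2 - kf x| < δ}, (isOpen_lt (by fun_prop) continuous_const).mem_nhds
    (by simp [δ]), fun U hU hxU hUN => ?_⟩
  have hloc : IsLocallyConstant U.boolIndicator :=
    (IsLocallyConstant.iff_continuous _).2 ((continuous_boolIndicator_iff_isClopen U).2 hU)
  obtain ⟨c, ⟨hcU, hc⟩, hpar⟩ := ((hloc.eventually_comp_graphPt_update hx).and
    (eventually_ksupp_lt hx)).and_frequently (frequently_neg_one_pow_eq 0) |>.exists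
  have hmem : graphPt (update x c true) ∈ U := by
    rwa [Set.mem_iff_boolIndicator, hcU, ← Set.mem_iff_boolIndicator]
  have hfar : |kf (update x c true) - kf x| < δ := hUN hmem
  rw [kf_update hc, hpar, pow_zero, one_mul, add_sub_cancel_left,
    abs_of_pos (by positivity)] at hfar
  exact lt_irrefl δ hfar
end
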